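/- In the typed mean-field model, if the noises {W^i_t} are independent across subsystems with distribution depending only on the type θ^i, and all subsystems of the same type use the identical prescription, then the typed mean field Z_t is a controlled Markov process with control γ̃_t = (γ_t(1),...,γ_t(k)): P(Z_{t+1} = z | Z_{1:t} = z_{1:t}, γ̃_{1:t}) = P(Z_{t+1} = z | Z_t = z_t, γ̃_t). -/

import Mathlib

open scoped ENNReal

noncomputable section

/-- Empirical distribution (mean field) of a tuple of `n` points in a finite set `X`. -/
def emp {X : Type*} [Fintype X] [DecidableEq X] {n : ℕ} (x : Fin n → X) : X → ℝ :=
  fun a => ((Finset.univ.filter fun i => x i = a).card : ℝ) / n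

variable {k : ℕ} {W : Type*}

/-- The typed mean field: the empirical distribution, on the augmented state space
`Σ θ, X(θ)`, of the augmented states `(θⁱ, xⁱ)`. -/
def empT {n : ℕ} (Xs : Fin k → Type*) [∀ j, Fintype (Xs j)] [∀ j, DecidableEq (Xs j)]
    (θ : Fin n → Fin k) (x : (i : Fin n) → Xs (θ i)) : ((j : Fin k) × Xs j) → ℝ :=
  emp (fun i => (⟨θ i, x i⟩ : (j : Fin k) × Xs j))

/-- Closed-loop state process of the typed mean-field system on the canonical sample
space (initial states and noises): `Xⁱ_{t+1} = f(θⁱ, Z_t, Xⁱ_t, γ_t(θⁱ)(Xⁱ_t), Wⁱ_t)`,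
where the type-indexed prescription `γ_t = ψ_t(Z_{0:t})` is a function of the typed
mean-field history. -/
def tState {n T : ℕ} (Xs Us : Fin k → Type*)
    [∀ j, Fintype (Xs j)] [∀ j, DecidableEq (Xs j)] [Inhabited W]
    (θ : Fin n → Fin k)
    (f : (j : Fin k) → (((j : Fin k) × Xs j) → ℝ) → Xs j → Us j → W → Xs j)
    (ψ : (t : ℕ) → (Fin (t + 1) → (((j : Fin k) × Xs j) → ℝ)) →
      ((j : Fin k) → Xs j → Us j))
    (ω : ((i : Fin n) → Xs (θ i)) × (Fin T → Fin n → W)) :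
    (t : ℕ) → (i : Fin n) → Xs (θ i)
  | 0 => ω.1
  | t + 1 => fun i =>
      f (θ i) (empT Xs θ (tState Xs Us θ f ψ ω t)) (tState Xs Us θ f ψ ω t i)
        (ψ t (fun s : Fin (t + 1) => empT Xs θ (tState Xs Us θ f ψ ω s)) (θ i)
          (tState Xs Us θ f ψ ω t i))
        (if h : t < T then ω.2 ⟨t, h⟩ i else default)
  termination_by t => t
  decreasing_by all_goals first | exact s.isLt | omega

/-!
Fix everything except the time-`t` noise. Then the states up to time `t` are fixed, hence so is
membership in both conditioning events, and `Z_{t+1}` is the empirical distribution of the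
independent moves `(θⁱ, xⁱ) ↦ (θⁱ, f(θⁱ, z_t, xⁱ, γ_t(θⁱ)(xⁱ), Wⁱ_t))`. The law of that empirical
distribution depends on the augmented states `(θⁱ, xⁱ)` only through their empirical distribution
`z_t`: two tuples with the same empirical distribution differ by a permutation of the agents, and
the noise law, which depends only on the type, is invariant under it. Hence each conditioning
event `D` satisfies `P(D ∩ {Z_{t+1} = z}) = P(D) · F(z_t, γ̃_t, z)`, and both conditional
probabilities equal `F`.
-/

open Finset Function

section EmpiricalDistribution

variable {α : Type*} [Fintype α] [DecidableEq α] {m : ℕ}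

theorem card_filter_eq_of_emp_eq {x y : Fin m → α} (h : emp x = emp y) (a : α) :
    #{i | x i = a} = #{i | y i = a} := by
  rcases Nat.eq_zero_or_pos m with rfl | hm
  · simp
  · have hm' : (m : ℝ) ≠ 0 := by positivity
    exact_mod_cast (div_left_inj' hm').1 (congrFun h a)

theorem exists_perm_comp_eq_of_emp_eq {x y : Fin m → α} (h : emp x = emp y) :
    ∃ σ : Equiv.Perm (Fin m), y ∘ σ = x :=
  ⟨Equiv.ofFiberEquiv fun a => Fintype.equivOfCardEq <| by
      rw [Fintype.card_subtype, Fintype.card_subtype, card_filter_eq_of_emp_eq h],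
    funext (Equiv.ofFiberEquiv_map _)⟩

theorem emp_comp_perm (x : Fin m → α) (σ : Equiv.Perm (Fin m)) : emp (x ∘ σ) = emp x := by
  funext a
  simp only [emp, comp_apply]
  congr 2
  exact card_equiv σ (by simp)

end EmpiricalDistribution

def empStepProb {α R : Type*} [Fintype α] [DecidableEq α] [Fintype W] [CommSemiring R] {m : ℕ}
    (g : α → W → α) (ν : α → W → R) (z : α → ℝ) (x : Fin m → α) : R :=
  ∑ w : Fin m → W, if emp (fun i => g (x i) (w i)) = z then ∏ i, ν (x i) (w i) else 0

section EmpStepProb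

variable {α R : Type*} [Fintype α] [DecidableEq α] [Fintype W] [CommSemiring R] {m : ℕ}
  (g : α → W → α) (ν : α → W → R) (z : α → ℝ)

theorem empStepProb_comp_perm (x : Fin m → α) (σ : Equiv.Perm (Fin m)) :
    empStepProb g ν z (x ∘ σ) = empStepProb g ν z x := by
  rw [empStepProb, empStepProb, ← (σ.symm.arrowCongr (Equiv.refl W)).sum_comp]
  refine sum_congr rfl fun w _ => ?_
  have hemp : (emp fun i => g (x (σ i)) (w (σ i))) = emp fun i => g (x i) (w i) :=
    emp_comp_perm (fun i => g (x i) (w i)) σ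
  simp only [Equiv.arrowCongr_apply, Equiv.symm_symm, Equiv.coe_refl, comp_apply, id]
  rw [hemp, Equiv.prod_comp σ fun i => ν (x i) (w i)]

theorem empStepProb_congr {x y : Fin m → α} (h : emp x = emp y) :
    empStepProb g ν z x = empStepProb g ν z y := by
  obtain ⟨σ, rfl⟩ := exists_perm_comp_eq_of_emp_eq h
  exact empStepProb_comp_perm g ν z y σ

end EmpStepProb

section Resampling

variable {ι V R : Type*} [Fintype ι] [DecidableEq ι] [Fintype V] [CommSemiring R]
  {μ : V → R}

theorem sum_prod_mul_eq_sum_prod_mul_sum_update (hμ : ∑ v, μ v = 1) (i₀ : ι)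
    (H : (ι → V) → R) :
    ∑ u, (∏ i, μ (u i)) * H u = ∑ u, (∏ i, μ (u i)) * ∑ v, μ v * H (update u i₀ v) := by
  let e := (Equiv.funSplitAt i₀ V).symm
  have hprod : ∀ a r, ∏ i, μ (e (a, r) i) = μ a * ∏ i : {i // i ≠ i₀}, μ (r i) := by
    intro a r
    rw [Fintype.prod_eq_mul_prod_subtype_ne _ i₀]
    simp only [e, Equiv.funSplitAt_symm_apply]
    exact congrArg _ (prod_congr rfl fun i _ => by rw [dif_neg i.2])
  have hupdate : ∀ a r v, update (e (a, r)) i₀ v = e (v, r) := by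
    intro a r v
    funext i
    by_cases hi : i = i₀
    · subst hi; simp [e, Equiv.funSplitAt, Equiv.piSplitAt]
    · simp [e, Equiv.funSplitAt, Equiv.piSplitAt, hi]
  simp only [← e.sum_comp, Fintype.sum_prod_type, hprod, hupdate]
  calc _ = ∑ r : {i // i ≠ i₀} → V, (∏ i, μ (r i)) * ∑ v, μ v * H (e (v, r)) := by
        rw [sum_comm]
        exact sum_congr rfl fun r _ => by rw [mul_sum]; exact sum_congr rfl fun a _ => by ring
    _ = _ := by simp only [mul_assoc, ← mul_sum, ← sum_mul, hμ, one_mul]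

theorem sum_inter_eq_sum_mul_of_sum_update {X : Type*} [Fintype X] [DecidableEq (X × (ι → V))]
    (hμ : ∑ v, μ v = 1) (i₀ : ι) (M : X → R) {D C : Finset (X × (ι → V))}
    (hD : ∀ ω v, (ω.1, update ω.2 i₀ v) ∈ D ↔ ω ∈ D) {F : R}
    (hF : ∀ ω ∈ D, ∑ v, (if (ω.1, update ω.2 i₀ v) ∈ C then μ v else 0) = F) :
    ∑ ω ∈ D ∩ C, M ω.1 * ∏ i, μ (ω.2 i) = (∑ ω ∈ D, M ω.1 * ∏ i, μ (ω.2 i)) * F := by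
  have hsum : ∀ S : Finset (X × (ι → V)), ∑ ω ∈ S, M ω.1 * ∏ i, μ (ω.2 i) =
      ∑ x, ∑ u, (∏ i, μ (u i)) * if (x, u) ∈ S then M x else 0 := by
    intro S
    rw [← sum_ite_mem_eq, Fintype.sum_prod_type]
    refine sum_congr rfl fun x _ => sum_congr rfl fun u _ => ?_
    split_ifs <;> simp [mul_comm]
  rw [hsum, hsum, sum_mul]
  refine sum_congr rfl fun x _ => ?_
  rw [sum_prod_mul_eq_sum_prod_mul_sum_update hμ i₀, sum_mul]
  refine sum_congr rfl fun u _ => ?_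
  have hDx : ∀ v, (x, update u i₀ v) ∈ D ↔ (x, u) ∈ D := hD (x, u)
  by_cases hu : (x, u) ∈ D
  · rw [if_pos hu, mul_assoc, ← hF (x, u) hu]
    congr 1
    rw [mul_sum]
    refine sum_congr rfl fun v _ => ?_
    simp only [mem_inter, hDx, hu, true_and]
    split_ifs <;> simp [mul_comm]
  · simp [mem_inter, hDx, hu]

end Resampling

def typedStep {Xs Us : Fin k → Type*}
    (f : (j : Fin k) → (((j : Fin k) × Xs j) → ℝ) → Xs j → Us j → W → Xs j)
    (z : ((j : Fin k) × Xs j) → ℝ) (γ : (j : Fin k) → Xs j → Us j)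
    (a : (j : Fin k) × Xs j) (w : W) : (j : Fin k) × Xs j :=
  ⟨a.1, f a.1 z a.2 (γ a.1 a.2) w⟩

section Dynamics

variable {n T : ℕ} {Xs Us : Fin k → Type*} [∀ j, Fintype (Xs j)] [∀ j, DecidableEq (Xs j)]
  [Inhabited W] {θ : Fin n → Fin k}
  {f : (j : Fin k) → (((j : Fin k) × Xs j) → ℝ) → Xs j → Us j → W → Xs j}
  {ψ : (t : ℕ) → (Fin (t + 1) → (((j : Fin k) × Xs j) → ℝ)) → ((j : Fin k) → Xs j → Us j)}

theorem tState_eq_of_forall_lt {ω ω' : ((i : Fin n) → Xs (θ i)) × (Fin T → Fin n → W)}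
    {s : ℕ} (h₁ : ω.1 = ω'.1) (h₂ : ∀ r : Fin T, (r : ℕ) < s → ω.2 r = ω'.2 r) :
    tState Xs Us θ f ψ ω s = tState Xs Us θ f ψ ω' s := by
  induction s using Nat.strong_induction_on with
  | _ s ih =>
    cases s with
    | zero => simpa [tState] using h₁
    | succ s =>
      have hprev : ∀ r ≤ s, tState Xs Us θ f ψ ω r = tState Xs Us θ f ψ ω' r :=
        fun r hr => ih r (by omega) fun q hq => h₂ q (by omega)
      have hhist : (fun r : Fin (s + 1) => empT Xs θ (tState Xs Us θ f ψ ω (r : ℕ))) =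
          fun r : Fin (s + 1) => empT Xs θ (tState Xs Us θ f ψ ω' (r : ℕ)) :=
        funext fun r => by rw [hprev r (Fin.is_le r)]
      have hnoise : ∀ i, (if h : s < T then ω.2 ⟨s, h⟩ i else default) =
          if h : s < T then ω'.2 ⟨s, h⟩ i else default := by
        intro i
        split_ifs with h
        · rw [h₂ ⟨s, h⟩ (Nat.lt_succ_self s)]
        · rfl
      rw [tState, tState, hhist, hprev s le_rfl]
      simp only [hnoise]

theorem tState_update_of_le (ω : ((i : Fin n) → Xs (θ i)) × (Fin T → Fin n → W)) {t : ℕ}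
    (ht : t < T) (v : Fin n → W) {s : ℕ} (hs : s ≤ t) :
    tState Xs Us θ f ψ (ω.1, update ω.2 ⟨t, ht⟩ v) s = tState Xs Us θ f ψ ω s := by
  refine tState_eq_of_forall_lt rfl fun r hr => update_of_ne (Fin.ne_of_val_ne ?_) _ _
  simp only
  omega

theorem tState_succ (ω : ((i : Fin n) → Xs (θ i)) × (Fin T → Fin n → W)) {t : ℕ}
    (ht : t < T) :
    tState Xs Us θ f ψ ω (t + 1) = fun i =>
      f (θ i) (empT Xs θ (tState Xs Us θ f ψ ω t)) (tState Xs Us θ f ψ ω t i)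
        (ψ t (fun r : Fin (t + 1) => empT Xs θ (tState Xs Us θ f ψ ω r)) (θ i)
          (tState Xs Us θ f ψ ω t i))
        (ω.2 ⟨t, ht⟩ i) := by
  rw [tState]
  simp only [dif_pos ht]

theorem empT_tState_succ_update (ω : ((i : Fin n) → Xs (θ i)) × (Fin T → Fin n → W)) {t : ℕ}
    (ht : t < T) (v : Fin n → W) :
    empT Xs θ (tState Xs Us θ f ψ (ω.1, update ω.2 ⟨t, ht⟩ v) (t + 1)) =
      emp fun i => typedStep f (empT Xs θ (tState Xs Us θ f ψ ω t))
        (ψ t fun r : Fin (t + 1) => empT Xs θ (tState Xs Us θ f ψ ω r))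
        ⟨θ i, tState Xs Us θ f ψ ω t i⟩ (v i) := by
  rw [tState_succ _ ht]
  simp (disch := omega) only [tState_update_of_le, update_self]
  rfl

theorem sum_inter_eq_sum_mul_empStepProb [Fintype W] [DecidableEq W]
    (ρ : (j : Fin k) → Xs j → ℝ≥0∞) {ν : Fin k → W → ℝ≥0∞} (hν : ∀ j, ∑ w : W, ν j w = 1)
    {mass : (((i : Fin n) → Xs (θ i)) × (Fin T → Fin n → W)) → ℝ≥0∞}
    (hmass : ∀ ω, mass ω = (∏ i, ρ (θ i) (ω.1 i)) * ∏ t, ∏ i, ν (θ i) (ω.2 t i))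
    {t : ℕ} (ht : t < T) {z : ((j : Fin k) × Xs j) → ℝ} {γ : (j : Fin k) → Xs j → Us j}
    {znext : ((j : Fin k) × Xs j) → ℝ}
    {D C : Finset (((i : Fin n) → Xs (θ i)) × (Fin T → Fin n → W))}
    (hD_update : ∀ ω v, (ω.1, update ω.2 ⟨t, ht⟩ v) ∈ D ↔ ω ∈ D)
    (hD : ∀ ω ∈ D, empT Xs θ (tState Xs Us θ f ψ ω t) = z ∧
      ψ t (fun r : Fin (t + 1) => empT Xs θ (tState Xs Us θ f ψ ω (r : ℕ))) = γ)
    (hC : ∀ ω, ω ∈ C ↔ empT Xs θ (tState Xs Us θ f ψ ω (t + 1)) = znext)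
    {x₀ : (i : Fin n) → Xs (θ i)} (hx₀ : empT Xs θ x₀ = z) :
    ∑ ω ∈ D ∩ C, mass ω = (∑ ω ∈ D, mass ω) *
      empStepProb (typedStep f z γ) (fun a => ν a.1) znext fun i => ⟨θ i, x₀ i⟩ := by
  simp only [hmass]
  refine sum_inter_eq_sum_mul_of_sum_update (μ := fun v : Fin n → W => ∏ i, ν (θ i) (v i)) ?_
    ⟨t, ht⟩ (fun x : (i : Fin n) → Xs (θ i) => ∏ i, ρ (θ i) (x i)) hD_update fun ω hω => ?_
  · rw [← Fintype.prod_sum]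
    simp [hν]
  · obtain ⟨hz, hγ⟩ := hD ω hω
    simp only [hC, empT_tState_succ_update, hz, hγ]
    exact empStepProb_congr (typedStep f z γ) (fun a => ν a.1) znext (hz.trans hx₀.symm)

end Dynamics

theorem ne_top_of_sum_eq_one {α : Type*} [Fintype α] {p : α → ℝ≥0∞} (hp : ∑ a, p a = 1)
    (a : α) : p a ≠ ⊤ :=
  (ENNReal.lt_top_of_sum_ne_top (hp.trans_ne ENNReal.one_ne_top) (mem_univ a)).ne

theorem typed_mean_field_is_controlled_markov_general {n T : ℕ}
    (Xs Us : Fin k → Type*)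
    [∀ j, Fintype (Xs j)] [∀ j, DecidableEq (Xs j)]
    [Fintype W] [DecidableEq W] [Inhabited W]
    (θ : Fin n → Fin k)
    (f : (j : Fin k) → (((j : Fin k) × Xs j) → ℝ) → Xs j → Us j → W → Xs j)
    (ψ : (t : ℕ) → (Fin (t + 1) → (((j : Fin k) × Xs j) → ℝ)) →
      ((j : Fin k) → Xs j → Us j))
    (ρ : (j : Fin k) → Xs j → ℝ≥0∞) (ν : Fin k → W → ℝ≥0∞)
    (hρ : ∀ j, ∑ x : Xs j, ρ j x = 1) (hν : ∀ j, ∑ w : W, ν j w = 1)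
    (mass : (((i : Fin n) → Xs (θ i)) × (Fin T → Fin n → W)) → ℝ≥0∞)
    (hmass : ∀ ω, mass ω =
      (∏ i, ρ (θ i) (ω.1 i)) * ∏ t, ∏ i, ν (θ i) (ω.2 t i))
    (t : ℕ) (ht : t < T)
    (zs : Fin (t + 1) → (((j : Fin k) × Xs j) → ℝ))
    (γs : Fin (t + 1) → ((j : Fin k) → Xs j → Us j))
    (znext : ((j : Fin k) × Xs j) → ℝ)
    (A B C : Finset (((i : Fin n) → Xs (θ i)) × (Fin T → Fin n → W)))
    (hA : ∀ ω, ω ∈ A ↔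
      (∀ s : Fin (t + 1), empT Xs θ (tState Xs Us θ f ψ ω (s : ℕ)) = zs s) ∧
      (∀ s : Fin (t + 1),
        ψ (s : ℕ) (fun r : Fin ((s : ℕ) + 1) => empT Xs θ (tState Xs Us θ f ψ ω (r : ℕ)))
          = γs s))
    (hB : ∀ ω, ω ∈ B ↔
      empT Xs θ (tState Xs Us θ f ψ ω t) = zs (Fin.last t) ∧
      ψ t (fun r : Fin (t + 1) => empT Xs θ (tState Xs Us θ f ψ ω (r : ℕ)))
        = γs (Fin.last t))
    (hC : ∀ ω, ω ∈ C ↔ empT Xs θ (tState Xs Us θ f ψ ω (t + 1)) = znext)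
    (hApos : ∑ ω ∈ A, mass ω ≠ 0) (hBpos : ∑ ω ∈ B, mass ω ≠ 0) :
    (∑ ω ∈ A ∩ C, mass ω) / (∑ ω ∈ A, mass ω) =
      (∑ ω ∈ B ∩ C, mass ω) / (∑ ω ∈ B, mass ω) := by
  obtain ⟨ω₀, hω₀⟩ := nonempty_of_sum_ne_zero hApos
  have hx₀ := ((hA ω₀).1 hω₀).1 (Fin.last t)
  have hAC := sum_inter_eq_sum_mul_empStepProb ρ hν hmass ht (C := C) (D := A)
    (fun ω v => by rw [hA, hA]; simp (disch := omega) only [tState_update_of_le])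
    (fun ω hω => ⟨((hA ω).1 hω).1 (Fin.last t), ((hA ω).1 hω).2 (Fin.last t)⟩) hC hx₀
  have hBC := sum_inter_eq_sum_mul_empStepProb ρ hν hmass ht (C := C) (D := B)
    (fun ω v => by rw [hB, hB]; simp (disch := omega) only [tState_update_of_le])
    (fun ω hω => (hB ω).1 hω) hC hx₀
  have hfin : ∀ D : Finset _, ∑ ω ∈ D, mass ω ≠ ⊤ := fun D =>
    ENNReal.sum_ne_top.2 fun ω _ => by
      rw [hmass]
      exact ENNReal.mul_ne_top (ENNReal.prod_ne_top fun i _ => ne_top_of_sum_eq_one (hρ _) _)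
        (ENNReal.prod_ne_top fun s _ =>
          ENNReal.prod_ne_top fun i _ => ne_top_of_sum_eq_one (hν _) _)
  rw [hAC, hBC, mul_comm, ENNReal.mul_div_cancel_right hApos (hfin A), mul_comm,
    ENNReal.mul_div_cancel_right hBpos (hfin B)]

/-- In the typed mean-field model, with noises independent across subsystems whose law
depends only on the type, and all subsystems of the same type using the identical
prescription, the typed mean field `Z_t` is a controlled Markov process with control
`γ̃_t = (γ_t(1),…,γ_t(k))`:
`P(Z_{t+1} = z | Z_{0:t} = z_{0:t}, γ̃_{0:t}) = P(Z_{t+1} = z | Z_t = z_t, γ̃_t)`.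
Probabilities of events are sums of the product-form masses; conditional probabilities
are ratios. -/
theorem typed_mean_field_is_controlled_markov {n T : ℕ} (hn : 1 ≤ n)
    (Xs Us : Fin k → Type*)
    [∀ j, Fintype (Xs j)] [∀ j, DecidableEq (Xs j)]
    [∀ j, Fintype (Us j)] [∀ j, DecidableEq (Us j)]
    [Fintype W] [DecidableEq W] [Inhabited W]
    (θ : Fin n → Fin k)
    (f : (j : Fin k) → (((j : Fin k) × Xs j) → ℝ) → Xs j → Us j → W → Xs j)
    (ψ : (t : ℕ) → (Fin (t + 1) → (((j : Fin k) × Xs j) → ℝ)) →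
      ((j : Fin k) → Xs j → Us j))
    (ρ : (j : Fin k) → Xs j → ℝ≥0∞) (ν : Fin k → W → ℝ≥0∞)
    (hρ : ∀ j, ∑ x : Xs j, ρ j x = 1) (hν : ∀ j, ∑ w : W, ν j w = 1)
    (mass : (((i : Fin n) → Xs (θ i)) × (Fin T → Fin n → W)) → ℝ≥0∞)
    (hmass : ∀ ω, mass ω =
      (∏ i, ρ (θ i) (ω.1 i)) * ∏ t, ∏ i, ν (θ i) (ω.2 t i))
    (t : ℕ) (ht : t < T)
    (zs : Fin (t + 1) → (((j : Fin k) × Xs j) → ℝ))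
    (γs : Fin (t + 1) → ((j : Fin k) → Xs j → Us j))
    (znext : ((j : Fin k) × Xs j) → ℝ)
    (A B C : Finset (((i : Fin n) → Xs (θ i)) × (Fin T → Fin n → W)))
    (hA : ∀ ω, ω ∈ A ↔
      (∀ s : Fin (t + 1), empT Xs θ (tState Xs Us θ f ψ ω (s : ℕ)) = zs s) ∧
      (∀ s : Fin (t + 1),
        ψ (s : ℕ) (fun r : Fin ((s : ℕ) + 1) => empT Xs θ (tState Xs Us θ f ψ ω (r : ℕ)))
          = γs s))
    (hB : ∀ ω, ω ∈ B ↔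
      empT Xs θ (tState Xs Us θ f ψ ω t) = zs (Fin.last t) ∧
      ψ t (fun r : Fin (t + 1) => empT Xs θ (tState Xs Us θ f ψ ω (r : ℕ)))
        = γs (Fin.last t))
    (hC : ∀ ω, ω ∈ C ↔ empT Xs θ (tState Xs Us θ f ψ ω (t + 1)) = znext)
    (hApos : ∑ ω ∈ A, mass ω ≠ 0) (hBpos : ∑ ω ∈ B, mass ω ≠ 0) :
    (∑ ω ∈ A ∩ C, mass ω) / (∑ ω ∈ A, mass ω) =
      (∑ ω ∈ B ∩ C, mass ω) / (∑ ω ∈ B, mass ω) :=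
  typed_mean_field_is_controlled_markov_general Xs Us θ f ψ ρ ν hρ hν mass hmass t ht zs γs znext A
    B C hA hB hC hApos hBpos
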